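/- arXiv:2104.01749 — 2 statements merged into one kernel-verified Lean document; each statement's English description precedes it below -/
import Mathlib

section
/- The maximum of det B(A₄, x, y, 1) over all vectors x, y ∈ {0, 1}⁴, where A₄ is the upper-left 4 × 4 submatrix of A₁₅, equals 5, and this maximum is attained by the bordering that yields A₅ (the upper-left 5 × 5 submatrix of A₁₅). -/
open Matrix

/-- The bordered matrix `B(A, x, y, z)`: upper-left `n × n` block `A`, first `n` entries of the
last column given by `y`, first `n` entries of the last row given by `x`, corner entry `z`. -/
def border {n : ℕ} (A : Matrix (Fin n) (Fin n) ℤ) (x y : Fin n → ℤ) (z : ℤ) :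
    Matrix (Fin (n + 1)) (Fin (n + 1)) ℤ :=
  Matrix.of fun i j =>
    if hi : (i : ℕ) < n then
      if hj : (j : ℕ) < n then A ⟨i, hi⟩ ⟨j, hj⟩ else y ⟨i, hi⟩
    else
      if hj : (j : ℕ) < n then x ⟨j, hj⟩ else z

/-- The matrix `A₁₅` from the paper. -/
def A15 : Matrix (Fin 15) (Fin 15) ℤ :=
  !![1, 0, 1, 1, 0, 0, 0, 0, 0, 0, 1, 0, 0, 1, 1;
      1, 1, 0, 0, 0, 1, 0, 1, 1, 1, 1, 0, 0, 0, 0;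
      0, 1, 1, 0, 1, 0, 0, 1, 0, 0, 1, 1, 0, 1, 0;
      0, 1, 0, 1, 1, 1, 0, 0, 0, 0, 0, 0, 1, 0, 1;
      1, 0, 0, 0, 1, 1, 1, 1, 0, 0, 0, 0, 0, 1, 0;
      0, 0, 1, 0, 0, 1, 1, 0, 1, 0, 0, 0, 1, 1, 0;
      0, 1, 0, 1, 0, 0, 1, 1, 0, 0, 1, 0, 1, 1, 0;
      0, 0, 1, 1, 0, 1, 0, 1, 0, 1, 0, 1, 1, 0, 0;
      0, 0, 0, 1, 1, 0, 0, 1, 1, 1, 0, 0, 0, 1, 1;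
      1, 1, 1, 0, 1, 0, 1, 0, 0, 1, 0, 0, 1, 0, 0;
      0, 0, 0, 0, 1, 1, 1, 0, 0, 1, 1, 1, 0, 0, 1;
      1, 1, 0, 1, 0, 0, 1, 0, 1, 0, 0, 1, 0, 0, 0;
      1, 0, 0, 0, 1, 0, 0, 1, 1, 0, 1, 1, 1, 0, 1;
      1, 1, 0, 0, 0, 1, 0, 0, 0, 1, 0, 1, 1, 1, 1;
      0, 1, 1, 0, 0, 0, 1, 1, 0, 0, 0, 0, 0, 0, 1]

/-- `Asub k h` is the upper-left `k × k` submatrix `A_k` of `A₁₅`. -/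
def Asub (k : ℕ) (h : k ≤ 15) : Matrix (Fin k) (Fin k) ℤ :=
  A15.submatrix (Fin.castLE h) (Fin.castLE h)

/-! Multiplying `B(A, x, y, z)` by a block matrix built from `adj A` gives the Schur-complement
formula `det B(A, x, y, z) = z det A - xᵀ adj(A) y` whenever `det A ≠ 0`. For `A₄` we have `det A₄ = 3`, so
`det B(A₄, x, y, 1) = 3 - xᵀ adj(A₄) y`, and a finite check shows that the bilinear form
`xᵀ adj(A₄) y` is at least `-2` on `{0, 1}⁴ × {0, 1}⁴`; the value `-2` is reached by the row and
column that border `A₄` inside `A₁₅`. -/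

theorem Matrix.det_fromBlocks_mul_det_pow {R m n : Type*} [CommRing R] [Fintype m] [DecidableEq m]
    [Fintype n] [DecidableEq n] (A : Matrix m m R) (B : Matrix m n R) (C : Matrix n m R)
    (D : Matrix n n R) :
    (fromBlocks A B C D).det * A.det ^ Fintype.card n =
      A.det * (A.det • D - C * A.adjugate * B).det := by
  have hmul : fromBlocks A B C D * fromBlocks 1 (-(A.adjugate * B)) 0 (A.det • 1) =
      fromBlocks A 0 C (A.det • D - C * A.adjugate * B) := by
    rw [fromBlocks_multiply]
    congr 1 <;> simp [← Matrix.mul_assoc, mul_adjugate, Matrix.mul_smul, sub_eq_neg_add, smul_mul]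
  have := congrArg det hmul
  rwa [det_mul, det_fromBlocks_zero₂₁, det_fromBlocks_zero₁₂, det_one, one_mul, det_smul, det_one,
    mul_one] at this

lemma border_eq_reindex_fromBlocks {n : ℕ} (A : Matrix (Fin n) (Fin n) ℤ) (x y : Fin n → ℤ)
    (z : ℤ) :
    border A x y z = reindex finSumFinEquiv finSumFinEquiv
      (fromBlocks A (replicateCol (Fin 1) y) (replicateRow (Fin 1) x) !![z]) := by
  ext i j
  induction i using Fin.lastCases <;> induction j using Fin.lastCases <;> simp [border]

lemma det_border_mul_det {n : ℕ} (A : Matrix (Fin n) (Fin n) ℤ) (x y : Fin n → ℤ) (z : ℤ) :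
    (border A x y z).det * A.det = A.det * (z * A.det - x ⬝ᵥ (A.adjugate *ᵥ y)) := by
  have h := det_fromBlocks_mul_det_pow A (replicateCol (Fin 1) y) (replicateRow (Fin 1) x) !![z]
  rw [← replicateRow_vecMul, replicateRow_mul_replicateCol, ← dotProduct_mulVec] at h
  rw [border_eq_reindex_fromBlocks, det_reindex_self]
  simpa [det_unique, mul_comm z] using h

lemma det_border {n : ℕ} {A : Matrix (Fin n) (Fin n) ℤ} (hA : A.det ≠ 0) (x y : Fin n → ℤ)
    (z : ℤ) : (border A x y z).det = z * A.det - x ⬝ᵥ (A.adjugate *ᵥ y) :=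
  mul_right_cancel₀ hA ((det_border_mul_det A x y z).trans (mul_comm _ _))

lemma border_submatrix_castLE {m k : ℕ} (M : Matrix (Fin m) (Fin m) ℤ) (hk : k < m) :
    border (M.submatrix (Fin.castLE hk.le) (Fin.castLE hk.le))
        (fun j => M ⟨k, hk⟩ (Fin.castLE hk.le j)) (fun i => M (Fin.castLE hk.le i) ⟨k, hk⟩)
        (M ⟨k, hk⟩ ⟨k, hk⟩) =
      M.submatrix (Fin.castLE hk) (Fin.castLE hk) := by
  ext i j
  induction i using Fin.lastCases <;> induction j using Fin.lastCases <;> simp [border] <;> rfl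

local notation "A₄" => Asub 4 (by norm_num)

lemma Asub_four_eq : A₄ = !![1, 0, 1, 1; 1, 1, 0, 0; 0, 1, 1, 0; 0, 1, 0, 1] := by
  ext i j
  fin_cases i <;> fin_cases j <;> rfl

lemma det_Asub_four : det A₄ = 3 := by
  rw [Asub_four_eq, det_succ_row_zero]
  simp [Fin.sum_univ_succ, det_fin_three, Fin.succAbove]

lemma adjugate_Asub_four :
    adjugate A₄ = !![1, 2, -1, -1; -1, 1, 1, 1; 1, -1, 2, -1; 1, -1, -1, 2] := by
  rw [Asub_four_eq]
  ext i j
  fin_cases i <;> fin_cases j <;>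
    simp [adjugate_apply, det_succ_row_zero, Fin.sum_univ_succ, updateRow_apply, Fin.succAbove]

lemma det_border_Asub_four (x y : Fin 4 → ℤ) :
    (border A₄ x y 1).det = 3 - x ⬝ᵥ (adjugate A₄ *ᵥ y) := by
  rw [det_border (by simp [det_Asub_four]), det_Asub_four, one_mul]

lemma neg_two_le_dotProduct_adjugate_Asub_four_mulVec {x y : Fin 4 → ℤ}
    (hx : ∀ i, x i = 0 ∨ x i = 1) (hy : ∀ i, y i = 0 ∨ y i = 1) :
    -2 ≤ x ⬝ᵥ (adjugate A₄ *ᵥ y) := by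
  have hcheck : ∀ x ∈ Fintype.piFinset fun _ : Fin 4 => ({0, 1} : Finset ℤ),
      ∀ y ∈ Fintype.piFinset fun _ : Fin 4 => ({0, 1} : Finset ℤ),
      -2 ≤ x ⬝ᵥ (!![1, 2, -1, -1; -1, 1, 1, 1; 1, -1, 2, -1; 1, -1, -1, 2] *ᵥ y) := by
    decide
  rw [adjugate_Asub_four]
  exact hcheck x (by simpa using hx) y (by simpa using hy)

/-- The maximum of `det B(A_4, x, y, 1)` over `x, y ∈ {0, 1}^4` equals `5`, and it is
attained by the bordering of `A_4` that yields `A_5`. -/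
theorem border_max_4 :
    IsGreatest {d : ℤ | ∃ x y : Fin 4 → ℤ,
        (∀ i, x i = 0 ∨ x i = 1) ∧ (∀ i, y i = 0 ∨ y i = 1) ∧
        d = (border (Asub 4 (by norm_num)) x y 1).det} 5 ∧
    border (Asub 4 (by norm_num))
        (fun j => A15 ⟨4, by norm_num⟩ (Fin.castLE (by norm_num) j))
        (fun i => A15 (Fin.castLE (by norm_num) i) ⟨4, by norm_num⟩) 1
      = Asub 5 (by norm_num) ∧
    (Asub 5 (by norm_num)).det = 5 := by
  have hA₅ : border A₄ (fun j => A15 ⟨4, by norm_num⟩ (Fin.castLE (by norm_num) j))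
      (fun i => A15 (Fin.castLE (by norm_num) i) ⟨4, by norm_num⟩) 1 = Asub 5 (by norm_num) := by
    convert border_submatrix_castLE A15 (k := 4) (by norm_num) using 2 <;> rfl
  have hdet : (Asub 5 (by norm_num)).det = 5 := by
    rw [← hA₅, det_border_Asub_four, adjugate_Asub_four]
    decide
  refine ⟨⟨⟨_, _, ?_, ?_, ((congrArg det hA₅).trans hdet).symm⟩, ?_⟩, hA₅, hdet⟩
  · decide
  · decide
  rintro d ⟨x, y, hx, hy, rfl⟩
  linarith [det_border_Asub_four x y, neg_two_le_dotProduct_adjugate_Asub_four_mulVec hx hy]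
end

section
/- The maximum of det B(A₁₂, x, y, 1) over all vectors x, y ∈ {0, 1}¹², where A₁₂ is the upper-left 12 × 12 submatrix of A₁₅, equals 4734, and this maximum is attained by the bordering that yields A₁₃ (the upper-left 13 × 13 submatrix of A₁₅). -/
/-!
By a Schur complement, `det B(A, x, y, 1) = det A - x ⬝ adj A ⬝ y` whenever `det A ≠ 0`.
For `A = A₁₂`, a fraction-free LU factorisation gives `det A₁₂ = 1608`, and an explicit matrix `C`
with `A₁₂ * C = 1608 • 1` is then its adjugate. For fixed `y` the minimum of `x ⬝ w` over
`x ∈ {0,1}¹²` is `∑ᵢ min 0 wᵢ`, and running through the `2¹²` vectors `y` shows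
`x ⬝ adj A₁₂ ⬝ y ≥ -3126`; the bordering that yields `A₁₃` attains this, so the maximum is
`1608 + 3126 = 4734`.
-/

open Matrix

namespace Matrix

variable {R : Type*} [CommRing R] {n : Type*} [Fintype n] [DecidableEq n]

theorem det_add_replicateCol_mul_replicateRow_of_isUnit {ι : Type*} [Unique ι]
    {A : Matrix n n R} (hA : IsUnit A.det) (u v : n → R) :
    (A + replicateCol ι u * replicateRow ι v).det = A.det + v ⬝ᵥ A.adjugate *ᵥ u := by
  rw [det_add_replicateCol_mul_replicateRow hA, det_unique (1 + _), Matrix.mul_assoc,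
    ← replicateCol_mulVec, add_apply, one_apply_eq, replicateRow_mul_replicateCol_apply, inv_def,
    smul_mulVec, dotProduct_smul, smul_eq_mul, mul_add, mul_one, ← mul_assoc,
    Ring.mul_inverse_cancel _ hA, one_mul]

theorem det_add_replicateCol_mul_replicateRow_of_ne_zero [IsDomain R] {ι : Type*} [Unique ι]
    {A : Matrix n n R} (hA : A.det ≠ 0) (u v : n → R) :
    (A + replicateCol ι u * replicateRow ι v).det = A.det + v ⬝ᵥ A.adjugate *ᵥ u := by
  let f := algebraMap R (FractionRing R)
  have hf : Function.Injective f := IsFractionRing.injective R (FractionRing R)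
  have hfA : IsUnit (f.mapMatrix A).det := by
    rw [← RingHom.map_det]
    exact ((map_ne_zero_iff f hf).2 hA).isUnit
  have hmap : f.mapMatrix (A + replicateCol ι u * replicateRow ι v) =
      f.mapMatrix A + replicateCol ι (f ∘ u) * replicateRow ι (f ∘ v) := by
    rw [map_add, RingHom.mapMatrix_apply, RingHom.mapMatrix_apply, Matrix.map_mul]
    rfl
  apply hf
  rw [map_add, RingHom.map_det, RingHom.map_det, hmap,
    det_add_replicateCol_mul_replicateRow_of_isUnit hfA, RingHom.map_dotProduct,
    ← RingHom.map_adjugate]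
  congr 2
  funext i
  exact (RingHom.map_mulVec f _ _ i).symm

theorem adjugate_eq_of_mul_eq_det_smul_one [IsDomain R] {A C : Matrix n n R} (hA : A.det ≠ 0)
    (h : A * C = A.det • 1) : A.adjugate = C := by
  apply smul_right_injective _ hA
  calc A.det • A.adjugate = A.adjugate * (A * C) := by rw [h, Matrix.mul_smul, Matrix.mul_one]
    _ = A.det • C := by rw [← Matrix.mul_assoc, adjugate_mul, Matrix.smul_mul, Matrix.one_mul]

theorem prod_diag_mul_det_of_isLowerTriangular [LinearOrder n] {L A : Matrix n n R}
    (hL : L.IsLowerTriangular) (hLA : (L * A).IsUpperTriangular) :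
    (∏ i, L i i) * A.det = ∏ i, (L * A) i i := by
  rw [← det_of_isLowerTriangular L hL, ← det_mul, det_of_isUpperTriangular hLA]

end Matrix

theorem sum_min_zero_le_dotProduct {ι S : Type*} [Fintype ι] [Semiring S] [LinearOrder S]
    [IsOrderedAddMonoid S] {x : ι → S} (hx : ∀ i, x i = 0 ∨ x i = 1) (w : ι → S) :
    ∑ i, min 0 (w i) ≤ x ⬝ᵥ w := by
  refine Finset.sum_le_sum fun i _ => ?_
  rcases hx i with h | h <;> simp [h]

theorem border_eq_submatrix_fromBlocks {n : ℕ} (A : Matrix (Fin n) (Fin n) ℤ) (x y : Fin n → ℤ)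
    (z : ℤ) :
    border A x y z = (fromBlocks A (replicateCol (Fin 1) y) (replicateRow (Fin 1) x) !![z]).submatrix
      finSumFinEquiv.symm finSumFinEquiv.symm := by
  ext i j
  induction i using Fin.lastCases <;> induction j using Fin.lastCases <;> simp [border]

theorem det_border_one {n : ℕ} {A : Matrix (Fin n) (Fin n) ℤ} (hA : A.det ≠ 0) (x y : Fin n → ℤ) :
    (border A x y 1).det = A.det - x ⬝ᵥ A.adjugate *ᵥ y := by
  have hone : !![(1 : ℤ)] = 1 := by ext i j; fin_cases i; fin_cases j; rfl
  rw [border_eq_submatrix_fromBlocks, det_submatrix_equiv_self, hone, det_fromBlocks_one₂₂,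
    sub_eq_add_neg, ← Matrix.neg_mul, sub_eq_add_neg, ← dotProduct_neg, ← mulVec_neg]
  exact det_add_replicateCol_mul_replicateRow_of_ne_zero hA (-y) x

-- Row `i` is row `i` of `L₀⁻¹`, scaled to clear denominators, where `A₁₂ = L₀ U₀` is the
-- LU factorisation.
def elimA12 : Matrix (Fin 12) (Fin 12) ℤ :=
  !![1, 0, 0, 0, 0, 0, 0, 0, 0, 0, 0, 0;
    -1, 1, 0, 0, 0, 0, 0, 0, 0, 0, 0, 0;
    1, -1, 1, 0, 0, 0, 0, 0, 0, 0, 0, 0;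
    1, -1, -1, 2, 0, 0, 0, 0, 0, 0, 0, 0;
    -1, -2, 1, 1, 3, 0, 0, 0, 0, 0, 0, 0;
    -2, 1, -3, 2, 1, 5, 0, 0, 0, 0, 0, 0;
    -1, -1, 0, -2, 2, 1, 3, 0, 0, 0, 0, 0;
    -5, 1, 3, -7, 4, -7, 3, 9, 0, 0, 0, 0;
    0, 3, -1, -1, -3, 4, -1, -3, 5, 0, 0, 0;
    -18, 3, -17, -5, -9, -10, -5, 21, 7, 24, 0, 0;
    83, 32, 57, -35, -41, -15, 20, -51, -17, -74, 110, 0;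
    -86, -75, 192, -102, -3, -130, -179, 162, -97, -138, 148, 302]

theorem det_Asub_12 : (Asub 12 (by norm_num)).det = 1608 := by
  -- `of_apply` exposes the entries of `elimA12` as a function, so that `Decidable` is found
  have h := prod_diag_mul_det_of_isLowerTriangular (L := elimA12) (A := Asub 12 (by norm_num))
    (by simp only [IsLowerTriangular, BlockTriangular, elimA12, of_apply]; decide +kernel)
    (by unfold IsUpperTriangular BlockTriangular; decide +kernel)
  have hL : ∏ i, elimA12 i i = 3228984000 := by decide +kernel
  have hU : ∏ i, (elimA12 * Asub 12 (by norm_num)) i i = 5192206272000 := by decide +kernel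
  rw [hL, hU] at h
  omega

theorem det_Asub_12_ne_zero : (Asub 12 (by norm_num)).det ≠ 0 := by
  rw [det_Asub_12]
  norm_num

def adjA12 : Matrix (Fin 12) (Fin 12) ℤ :=
  !![436, 240, -132, -156, 492, -388, -392, -36, -172, 120, -152, 320;
    -424, 294, 180, 432, -342, -80, 230, -24, -338, 348, -280, 124;
    276, -180, 300, -84, -168, 492, -108, 228, -72, 312, -288, -240;
    388, -288, -324, 348, -108, -124, 256, 204, 260, -144, -32, 152;
    84, -282, 336, 324, 246, -60, -330, -420, 450, 60, 192, -108;
    -48, 276, -192, 504, 204, 264, -156, 240, -372, -264, 120, -168;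
    -200, -324, -264, -312, 180, 296, 556, -72, -76, 240, 232, 104;
    -272, 90, 252, -360, 486, -112, 322, 288, 170, -156, -392, -148;
    -28, 228, 156, -108, -216, 556, -292, -396, 520, -288, -64, 304;
    -172, 252, -420, -204, -408, -260, 44, 324, 208, 528, 296, -200;
    508, 228, 156, -108, -216, 20, 244, -396, -16, -288, 472, -232;
    -172, -150, 384, -204, -6, -260, -358, 324, -194, -276, 296, 604]

theorem adjugate_Asub_12 : (Asub 12 (by norm_num)).adjugate = adjA12 :=
  adjugate_eq_of_mul_eq_det_smul_one det_Asub_12_ne_zero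
    (by rw [det_Asub_12]; decide +kernel)

theorem border_Asub_12_eq_Asub_13 :
    border (Asub 12 (by norm_num))
        (fun j => A15 ⟨12, by norm_num⟩ (Fin.castLE (by norm_num) j))
        (fun i => A15 (Fin.castLE (by norm_num) i) ⟨12, by norm_num⟩) 1
      = Asub 13 (by norm_num) := by
  decide +kernel

theorem det_Asub_13 : (Asub 13 (by norm_num)).det = 4734 := by
  rw [← border_Asub_12_eq_Asub_13, det_border_one det_Asub_12_ne_zero, det_Asub_12,
    adjugate_Asub_12]
  decide +kernel

theorem neg_3126_le_sum_min_zero_adjA12_mulVec (b : Fin 12 → Bool) :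
    -3126 ≤ ∑ i, min 0 ((adjA12 *ᵥ fun j => if b j then 1 else 0) i) := by
  revert b
  -- expanding the sums first keeps the kernel's evaluation of the `2¹²` cases cheap
  simp only [Fin.forall_fin_succ_pi, Fin.forall_fin_zero_pi, adjA12, mulVec, dotProduct,
    Fin.sum_univ_succ, Fin.sum_univ_zero, Fin.cons_zero, Fin.cons_succ, cons_val_zero,
    cons_val_succ, of_apply, mul_ite, mul_one, mul_zero, add_zero]
  decide +kernel

theorem neg_3126_le_dotProduct_adjA12_mulVec {x y : Fin 12 → ℤ} (hx : ∀ i, x i = 0 ∨ x i = 1)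
    (hy : ∀ i, y i = 0 ∨ y i = 1) : -3126 ≤ x ⬝ᵥ adjA12 *ᵥ y := by
  obtain ⟨b, rfl⟩ : ∃ b : Fin 12 → Bool, y = fun j => if b j then 1 else 0 :=
    ⟨fun j => decide (y j = 1), funext fun j => by rcases hy j with h | h <;> simp [h]⟩
  exact (neg_3126_le_sum_min_zero_adjA12_mulVec b).trans (sum_min_zero_le_dotProduct hx _)

/-- The maximum of `det B(A_12, x, y, 1)` over `x, y ∈ {0, 1}^12` equals `4734`, and it is
attained by the bordering of `A_12` that yields `A_13`. -/
theorem border_max_12 :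
    IsGreatest {d : ℤ | ∃ x y : Fin 12 → ℤ,
        (∀ i, x i = 0 ∨ x i = 1) ∧ (∀ i, y i = 0 ∨ y i = 1) ∧
        d = (border (Asub 12 (by norm_num)) x y 1).det} 4734 ∧
    border (Asub 12 (by norm_num))
        (fun j => A15 ⟨12, by norm_num⟩ (Fin.castLE (by norm_num) j))
        (fun i => A15 (Fin.castLE (by norm_num) i) ⟨12, by norm_num⟩) 1
      = Asub 13 (by norm_num) ∧
    (Asub 13 (by norm_num)).det = 4734 := by
  refine ⟨⟨⟨_, _, ?_, ?_, ((congrArg det border_Asub_12_eq_Asub_13).trans det_Asub_13).symm⟩, ?_⟩,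
    border_Asub_12_eq_Asub_13, det_Asub_13⟩
  · decide +kernel
  · decide +kernel
  · rintro d ⟨x, y, hx, hy, rfl⟩
    rw [det_border_one det_Asub_12_ne_zero, det_Asub_12, adjugate_Asub_12]
    linarith [neg_3126_le_dotProduct_adjA12_mulVec hx hy]
end
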